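/- In ZF with Turing determinacy, every function F from the Turing degrees to the ordinals is non-decreasing on some upper cone: there is a degree x such that for all degrees y, z with x ≤ y ≤ z, F(y) ≤ F(z). -/

import Mathlib

/-- Relativized partial recursiveness: `f` is partial recursive in the oracle `O`. -/
inductive OracleRecursiveIn (O : ℕ →. ℕ) : (ℕ →. ℕ) → Prop
  | oracle : OracleRecursiveIn O O
  | zero : OracleRecursiveIn O (pure 0)
  | succ : OracleRecursiveIn O Nat.succ
  | left : OracleRecursiveIn O ↑fun n : ℕ => n.unpair.1
  | right : OracleRecursiveIn O ↑fun n : ℕ => n.unpair.2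
  | pair {f g} : OracleRecursiveIn O f → OracleRecursiveIn O g →
      OracleRecursiveIn O fun n => Nat.pair <$> f n <*> g n
  | comp {f g} : OracleRecursiveIn O f → OracleRecursiveIn O g →
      OracleRecursiveIn O fun n => g n >>= f
  | prec {f g} : OracleRecursiveIn O f → OracleRecursiveIn O g →
      OracleRecursiveIn O (Nat.unpaired fun a n =>
        n.rec (f a) fun y IH => do let i ← IH; g (Nat.pair a (Nat.pair y i)))
  | rfind {f} : OracleRecursiveIn O f →
      OracleRecursiveIn O fun a => Nat.rfind fun n => (fun m => m = 0) <$> f (Nat.pair a n)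

theorem OracleRecursiveIn.trans' {O O' f : ℕ →. ℕ}
    (hf : OracleRecursiveIn O f) (hO : OracleRecursiveIn O' O) : OracleRecursiveIn O' f := by
  induction hf with
  | oracle => exact hO
  | zero => exact .zero
  | succ => exact .succ
  | left => exact .left
  | right => exact .right
  | pair _ _ ih₁ ih₂ => exact .pair ih₁ ih₂
  | comp _ _ ih₁ ih₂ => exact .comp ih₁ ih₂
  | prec _ _ ih₁ ih₂ => exact .prec ih₁ ih₂
  | rfind _ ih => exact .rfind ih

/-- Reals are identified with elements of Cantor space `2^ω`. -/
abbrev TReal : Type := ℕ → Bool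

/-- The characteristic (total) function of a real, as a partial function on `ℕ`. -/
def charFn (x : TReal) : ℕ →. ℕ := fun n => Part.some (cond (x n) 1 0)

/-- Turing reducibility `x ≤ᵀ y` between reals. -/
def TuringLE (x y : TReal) : Prop := OracleRecursiveIn (charFn y) (charFn x)

theorem TuringLE.refl (x : TReal) : TuringLE x x := OracleRecursiveIn.oracle

theorem TuringLE.trans {x y z : TReal} (h₁ : TuringLE x y) (h₂ : TuringLE y z) :
    TuringLE x z := OracleRecursiveIn.trans' h₁ h₂

/-- Turing equivalence of reals. -/
def TuringEquiv (x y : TReal) : Prop := TuringLE x y ∧ TuringLE y x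

instance turingSetoid : Setoid TReal :=
  ⟨TuringEquiv, fun x => ⟨TuringLE.refl x, TuringLE.refl x⟩, fun h => ⟨h.2, h.1⟩,
    fun h₁ h₂ => ⟨h₁.1.trans h₂.1, h₂.2.trans h₁.2⟩⟩

/-- The Turing degrees. -/
def TuringDegreeOld : Type := Quotient turingSetoid

/-- The Turing degree of a real. -/
def deg (x : TReal) : TuringDegreeOld := Quotient.mk _ x

instance : PartialOrder TuringDegreeOld where
  le := Quotient.lift₂ TuringLE (by
    rintro a b a' b' ⟨hab, hba⟩ ⟨hcd, hdc⟩
    exact propext ⟨fun h => (hba.trans h).trans hcd, fun h => (hab.trans h).trans hdc⟩)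
  le_refl := fun d => Quotient.inductionOn d TuringLE.refl
  le_trans := fun a b c => Quotient.inductionOn₃ a b c fun _ _ _ h₁ h₂ => TuringLE.trans h₁ h₂
  le_antisymm := fun a b => Quotient.inductionOn₂ a b fun _ _ h₁ h₂ => Quotient.sound ⟨h₁, h₂⟩

/-- The upper cone of Turing degrees above `x`. -/
def upperCone (x : TuringDegreeOld) : Set TuringDegreeOld := {y | x ≤ y}

/-- Turing determinacy: every set of Turing degrees contains or is disjoint from
an upper cone. -/
def TD : Prop :=
  ∀ A : Set TuringDegreeOld, (∃ x, upperCone x ⊆ A) ∨ (∃ x, upperCone x ⊆ Aᶜ)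

/-- The countable choice axiom for sets of reals. -/
def CCR : Prop :=
  ∀ A : ℕ → Set TReal, (∀ n, (A n).Nonempty) → ∃ f : ℕ → TReal, ∀ n, f n ∈ A n

/-!
The points `d` from which `F` never decreases (`F d ≤ F e` for all `e ≥ d`) are cofinal: above
any `x`, a point of `Set.Ici x` where `F` attains its least value is one of them, since ordinals
are well-ordered. Under Turing determinacy a cofinal set of degrees meets every cone, so its
complement contains no cone, and the set itself must contain one.
-/

theorem isCofinal_setOf_forall_le_imp_apply_le {α β : Type*} [Preorder α] [LinearOrder β]
    [WellFoundedLT β] (F : α → β) : IsCofinal {d | ∀ e, d ≤ e → F d ≤ F e} := fun x =>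
  ⟨Function.argminOn F (Set.Ici x) ⟨x, le_rfl⟩,
    fun _ he => Function.argminOn_le F _ (le_trans (Function.argminOn_mem F _ _) he),
    Function.argminOn_mem F _ _⟩

theorem TD.exists_upperCone_subset_of_isCofinal (td : TD) {A : Set TuringDegreeOld}
    (hA : IsCofinal A) : ∃ x, upperCone x ⊆ A := by
  refine (td A).resolve_right ?_
  rintro ⟨x, hx⟩
  obtain ⟨y, hyA, hxy⟩ := hA x
  exact hx hxy hyA

/-- Under TD, every `F : 𝒟 → Ord` is non-decreasing on an upper cone. -/
theorem ord_function_nondecreasing_on_cone (td : TD) (F : TuringDegreeOld → Ordinal) :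
    ∃ x : TuringDegreeOld, ∀ y z, x ≤ y → y ≤ z → F y ≤ F z := by
  obtain ⟨x, hx⟩ :=
    td.exists_upperCone_subset_of_isCofinal (isCofinal_setOf_forall_le_imp_apply_le F)
  exact ⟨x, fun y z hxy hyz => hx hxy z hyz⟩
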